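/- arXiv:1007.3911 — 9 statements merged into one kernel-verified Lean document; each statement's English description precedes it below -/
import Mathlib

section
/- Let T > 0, Γ > 0, γ > 0, let B_x, B_y : [0,T] → ℝ and y : [0,T] → ℝ be continuous, and let ρ̂ : [0,T] → M₂(ℂ) be differentiable with ρ̂'(t) = i[B_x(T−t)σ_x + B_y(T−t)σ_y, ρ̂(t)] − Γ(σ_z ρ̂(t) σ_z − ρ̂(t)) + (Γ−γ)σ_z(tr(σ_z ρ̂(t)) − y(T−t)) for all t ∈ [0,T]. If ρ̂(0) is Hermitian and tr(ρ̂(0)) = 1, then ρ̂(t) is Hermitian and tr(ρ̂(t)) = 1 for all t ∈ [0,T]. -/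
open Matrix MeasureTheory Filter Set

attribute [local instance] Matrix.normedAddCommGroup Matrix.normedSpace

noncomputable def σx : Matrix (Fin 2) (Fin 2) ℂ := !![0, 1; 1, 0]
noncomputable def σy : Matrix (Fin 2) (Fin 2) ℂ := !![0, -Complex.I; Complex.I, 0]
noncomputable def σz : Matrix (Fin 2) (Fin 2) ℂ := !![1, 0; 0, -1]

/-- The matrix commutator `[A, B] = A * B - B * A`. -/
noncomputable def mcomm (A B : Matrix (Fin 2) (Fin 2) ℂ) : Matrix (Fin 2) (Fin 2) ℂ := A * B - B * A

/-!
The trace of the right-hand side vanishes identically, so `tr ρ̂` is constant.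

For Hermitianity, `δ = ρ̂ᴴ - ρ̂` solves the same equation without the source term `y`, which is
real and cancels. Measure `δ` by `E = ∑ |δᵢⱼ|²`. The Hamiltonian part `i[H, δ]` does not change
`E`, because `Re tr(δᴴ · i[H, δ]) = -Im (tr(H δ δᴴ) - tr(H δᴴ δ)) = 0` for Hermitian `H`. The two
dissipative terms have constant coefficients, so `E' ≤ 4 (|Γ| + |Γ - γ|) E`, and Grönwall's
inequality with `E(0) = 0` gives `E ≡ 0`.
-/

open scoped InnerProductSpace

section
variable {m n F : Type*} [NormedAddCommGroup F] {s : Set ℝ} {t : ℝ}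

theorem HasDerivWithinAt.matrix_apply [NormedSpace ℝ F] [Fintype m] [Fintype n]
    {δ : ℝ → Matrix m n F} {δ' : Matrix m n F} (h : HasDerivWithinAt δ δ' s t) (i : m) (j : n) :
    HasDerivWithinAt (fun u => δ u i j) (δ' i j) s t :=
  hasDerivWithinAt_pi.1 (hasDerivWithinAt_pi.1 h i) j

theorem HasDerivWithinAt.matrix_trace [NormedSpace ℝ F] [Fintype n]
    {δ : ℝ → Matrix n n F} {δ' : Matrix n n F} (h : HasDerivWithinAt δ δ' s t) :
    HasDerivWithinAt (fun u => (δ u).trace) δ'.trace s t :=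
  HasDerivWithinAt.fun_sum fun i _ => h.matrix_apply i i

theorem HasDerivWithinAt.sum_norm_sq_apply [InnerProductSpace ℝ F] [Fintype m] [Fintype n]
    {δ : ℝ → Matrix m n F} {δ' : Matrix m n F} (h : HasDerivWithinAt δ δ' s t) :
    HasDerivWithinAt (fun u => ∑ i, ∑ j, ‖δ u i j‖ ^ 2)
      (∑ i, ∑ j, 2 * ⟪δ t i j, δ' i j⟫_ℝ) s t :=
  HasDerivWithinAt.fun_sum fun i _ => HasDerivWithinAt.fun_sum fun j _ =>
    (h.matrix_apply i j).norm_sq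

theorem Matrix.eq_zero_of_sum_norm_sq_eq_zero [Fintype m] [Fintype n] {A : Matrix m n F}
    (h : ∑ i, ∑ j, ‖A i j‖ ^ 2 = 0) : A = 0 := by
  ext i j
  have hi := (Finset.sum_eq_zero_iff_of_nonneg fun i _ => by positivity).1 h i (Finset.mem_univ i)
  have hij := (Finset.sum_eq_zero_iff_of_nonneg fun j _ => by positivity).1 hi j (Finset.mem_univ j)
  simpa using hij
end

theorem eq_zero_of_deriv_right_le_mul_self {f f' : ℝ → ℝ} {K a b : ℝ}
    (hf : ContinuousOn f (Icc a b)) (hf' : ∀ x ∈ Ico a b, HasDerivWithinAt f (f' x) (Ici x) x)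
    (ha : f a = 0) (hnonneg : ∀ x ∈ Icc a b, 0 ≤ f x) (bound : ∀ x ∈ Ico a b, f' x ≤ K * f x) :
    ∀ x ∈ Icc a b, f x = 0 := by
  intro x hx
  have hle := le_gronwallBound_of_liminf_deriv_right_le hf
    (fun x hx _ hr => (hf' x hx).liminf_right_slope_le hr) ha.le
    (fun x hx => (add_zero (K * f x)).symm ▸ bound x hx) x hx
  rw [gronwallBound_ε0_δ0] at hle
  exact le_antisymm hle (hnonneg x hx)

local notation "M2" => Matrix (Fin 2) (Fin 2) ℂ

noncomputable def observerField (b₁ b₂ Γ γ w : ℝ) (A : M2) : M2 :=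
  Complex.I • mcomm ((b₁ : ℂ) • σx + (b₂ : ℂ) • σy) A - (Γ : ℂ) • (σz * A * σz - A)
    + (((Γ : ℂ) - (γ : ℂ)) * ((σz * A).trace - (w : ℂ))) • σz

section
variable (b₁ b₂ Γ γ : ℝ)

theorem trace_observerField (w : ℝ) (A : M2) : (observerField b₁ b₂ Γ γ w A).trace = 0 := by
  simp [observerField, mcomm, σx, σy, σz, Matrix.trace_fin_two, Matrix.mul_apply,
    Fin.sum_univ_two, Matrix.vecMul, dotProduct]
  ring

theorem conjTranspose_observerField_sub (w : ℝ) (A : M2) :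
    (observerField b₁ b₂ Γ γ w A)ᴴ - observerField b₁ b₂ Γ γ w A
      = observerField b₁ b₂ Γ γ 0 (Aᴴ - A) := by
  ext i j
  fin_cases i <;> fin_cases j <;>
  · simp [observerField, mcomm, σx, σy, σz, Matrix.trace_fin_two, Matrix.mul_apply,
      Fin.sum_univ_two, Matrix.vecMul, dotProduct]
    ring

theorem sum_inner_observerField (A : M2) :
    ∑ i, ∑ j, ⟪A i j, observerField b₁ b₂ Γ γ 0 A i j⟫_ℝ
      = 2 * Γ * (‖A 0 1‖ ^ 2 + ‖A 1 0‖ ^ 2) + (Γ - γ) * ‖A 0 0 - A 1 1‖ ^ 2 := by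
  simp [observerField, mcomm, σx, σy, σz, Matrix.trace_fin_two, Matrix.mul_apply,
    Fin.sum_univ_two, Matrix.vecMul, dotProduct, Complex.inner, ← Complex.normSq_eq_norm_sq,
    Complex.normSq_apply]
  ring

theorem sum_inner_observerField_le (A : M2) :
    ∑ i, ∑ j, ⟪A i j, observerField b₁ b₂ Γ γ 0 A i j⟫_ℝ
      ≤ 2 * (|Γ| + |Γ - γ|) * ∑ i, ∑ j, ‖A i j‖ ^ 2 := by
  have hdiag : ‖A 0 0 - A 1 1‖ ^ 2 ≤ 2 * (‖A 0 0‖ ^ 2 + ‖A 1 1‖ ^ 2) :=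
    (pow_le_pow_left₀ (norm_nonneg _) (norm_sub_le _ _) 2).trans add_sq_le
  rw [sum_inner_observerField]
  simp only [Fin.sum_univ_two]
  nlinarith [le_abs_self Γ, le_abs_self (Γ - γ), abs_nonneg Γ, abs_nonneg (Γ - γ),
    sq_nonneg ‖A 0 1‖, sq_nonneg ‖A 1 0‖, sq_nonneg ‖A 0 0 - A 1 1‖]

end

section
variable {a b Γ γ : ℝ} {b₁ b₂ w : ℝ → ℝ} {ρ : ℝ → M2}

theorem trace_eq_of_hasDerivWithinAt_observerField
    (hρ : ∀ t ∈ Icc a b,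
      HasDerivWithinAt ρ (observerField (b₁ t) (b₂ t) Γ γ (w t) (ρ t)) (Icc a b) t) :
    ∀ t ∈ Icc a b, (ρ t).trace = (ρ a).trace := by
  have hderiv (t) (ht : t ∈ Icc a b) :
      HasDerivWithinAt (fun u => (ρ u).trace) 0 (Icc a b) t := by
    simpa only [trace_observerField] using (hρ t ht).matrix_trace
  exact constant_of_has_deriv_right_zero (fun t ht => (hderiv t ht).continuousWithinAt)
    fun t ht => (hderiv t (Ico_subset_Icc_self ht)).mono_of_mem_nhdsWithin
      (Icc_mem_nhdsGE_of_mem ht)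

theorem isHermitian_of_hasDerivWithinAt_observerField
    (hρ : ∀ t ∈ Icc a b,
      HasDerivWithinAt ρ (observerField (b₁ t) (b₂ t) Γ γ (w t) (ρ t)) (Icc a b) t)
    (ha : (ρ a).IsHermitian) :
    ∀ t ∈ Icc a b, (ρ t).IsHermitian := by
  set δ : ℝ → M2 := fun t => (ρ t)ᴴ - ρ t
  have hδ (t) (ht : t ∈ Icc a b) :
      HasDerivWithinAt δ (observerField (b₁ t) (b₂ t) Γ γ 0 (δ t)) (Icc a b) t := by
    rw [← conjTranspose_observerField_sub _ _ _ _ (w t)]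
    exact (hρ t ht).star.sub (hρ t ht)
  set E : ℝ → ℝ := fun t => ∑ i, ∑ j, ‖δ t i j‖ ^ 2
  have hE (t) (ht : t ∈ Icc a b) := (hδ t ht).sum_norm_sq_apply
  have hE0 : ∀ t ∈ Icc a b, E t = 0 := by
    refine eq_zero_of_deriv_right_le_mul_self (K := 4 * (|Γ| + |Γ - γ|))
      (fun t ht => (hE t ht).continuousWithinAt)
      (fun t ht => (hE t (Ico_subset_Icc_self ht)).mono_of_mem_nhdsWithin
        (Icc_mem_nhdsGE_of_mem ht)) ?_ (fun t _ => by positivity) fun t _ => ?_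
    · have hδa : δ a = 0 := sub_eq_zero.2 ha
      simp [E, hδa]
    · have hbound := sum_inner_observerField_le (b₁ t) (b₂ t) Γ γ (δ t)
      simp only [← Finset.mul_sum]
      linarith
  intro t ht
  exact sub_eq_zero.1 (Matrix.eq_zero_of_sum_norm_sq_eq_zero (hE0 t ht))
end

theorem backward_observer_hermitian_trace_preserving_general
    (T Γ γ : ℝ)
    (Bx By y : ℝ → ℝ)
    (ρ : ℝ → Matrix (Fin 2) (Fin 2) ℂ)
    (hρ : ∀ t ∈ Icc (0:ℝ) T, HasDerivWithinAt ρ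
      (Complex.I • mcomm ((Bx (T - t) : ℂ) • σx + (By (T - t) : ℂ) • σy) (ρ t)
        - (Γ : ℂ) • (σz * ρ t * σz - ρ t)
        + (((Γ : ℂ) - (γ : ℂ)) * ((σz * ρ t).trace - (y (T - t) : ℂ))) • σz)
      (Icc 0 T) t)
    (h0herm : (ρ 0).IsHermitian) (h0tr : (ρ 0).trace = 1) :
    ∀ t ∈ Icc (0:ℝ) T, (ρ t).IsHermitian ∧ (ρ t).trace = 1 := fun t ht =>
  ⟨isHermitian_of_hasDerivWithinAt_observerField (b₁ := fun t => Bx (T - t))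
      (b₂ := fun t => By (T - t)) (w := fun t => y (T - t)) hρ h0herm t ht,
    (trace_eq_of_hasDerivWithinAt_observerField (b₁ := fun t => Bx (T - t))
      (b₂ := fun t => By (T - t)) (w := fun t => y (T - t)) hρ t ht).trans h0tr⟩

/-- the backward observer dynamics preserves Hermitianity and the trace. -/
theorem backward_observer_hermitian_trace_preserving
    (T Γ γ : ℝ) (hT : 0 < T) (hΓ : 0 < Γ) (hγ : 0 < γ)
    (Bx By y : ℝ → ℝ)
    (hBx : ContinuousOn Bx (Icc 0 T)) (hBy : ContinuousOn By (Icc 0 T))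
    (hy : ContinuousOn y (Icc 0 T))
    (ρ : ℝ → Matrix (Fin 2) (Fin 2) ℂ)
    (hρ : ∀ t ∈ Icc (0:ℝ) T, HasDerivWithinAt ρ
      (Complex.I • mcomm ((Bx (T - t) : ℂ) • σx + (By (T - t) : ℂ) • σy) (ρ t)
        - (Γ : ℂ) • (σz * ρ t * σz - ρ t)
        + (((Γ : ℂ) - (γ : ℂ)) * ((σz * ρ t).trace - (y (T - t) : ℂ))) • σz)
      (Icc 0 T) t)
    (h0herm : (ρ 0).IsHermitian) (h0tr : (ρ 0).trace = 1) :
    ∀ t ∈ Icc (0:ℝ) T, (ρ t).IsHermitian ∧ (ρ t).trace = 1 :=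
  backward_observer_hermitian_trace_preserving_general T Γ γ Bx By y ρ hρ h0herm h0tr
end

section
/- Let Γ > 0, γ > 0, let B_x, B_y : I → ℝ be continuous on an interval I ⊆ ℝ, and let ρ̃ : I → M₂(ℂ) be differentiable such that for each t ∈ I, ρ̃(t) is Hermitian with tr(ρ̃(t)) = 0 and ρ̃'(t) = −i[B_x(t)σ_x + B_y(t)σ_y, ρ̃(t)] + Γ(σ_z ρ̃(t) σ_z − ρ̃(t)) − (Γ+γ)σ_z·tr(σ_z ρ̃(t)). Set X(t) = tr(σ_x ρ̃(t)), Y(t) = tr(σ_y ρ̃(t)), Z(t) = tr(σ_z ρ̃(t)). Then X, Y, Z are real-valued and differentiable on I with X'(t) = 2B_y(t)Z(t) − 2ΓX(t), Y'(t) = −2B_x(t)Z(t) − 2ΓY(t), and Z'(t) = 2B_x(t)Y(t) − 2B_y(t)X(t) − 2(Γ+γ)Z(t). -/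
open Matrix MeasureTheory Filter Set

attribute [local instance] Matrix.normedAddCommGroup Matrix.normedSpace

/-- Differentiating the real part of `tr (M * ρ s)`. -/
lemma aux_deriv_trace_re (M : Matrix (Fin 2) (Fin 2) ℂ) {ρ : ℝ → Matrix (Fin 2) (Fin 2) ℂ}
    {ρ't : Matrix (Fin 2) (Fin 2) ℂ} {I : Set ℝ} {t : ℝ}
    (h : HasDerivWithinAt ρ ρ't I t) :
    HasDerivWithinAt (fun s => ((M * ρ s).trace).re) (((M * ρ't).trace).re) I t := by
  let L : Matrix (Fin 2) (Fin 2) ℂ →ₗ[ℝ] ℝ :=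
    { toFun := fun A => ((M * A).trace).re
      map_add' := by intro A B; simp [Matrix.mul_add]
      map_smul' := by intro c A; simp [Matrix.mul_smul] }
  exact L.toContinuousLinearMap.hasFDerivAt.comp_hasDerivWithinAt t h

/-- Bloch-vector dynamics of the forward error equation. -/
theorem bloch_coordinates_forward_error
    (Γ γ : ℝ) (hΓ : 0 < Γ) (hγ : 0 < γ)
    (I : Set ℝ) (hI : I.OrdConnected)
    (Bx By : ℝ → ℝ) (hBx : ContinuousOn Bx I) (hBy : ContinuousOn By I)
    (ρ ρ' : ℝ → Matrix (Fin 2) (Fin 2) ℂ)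
    (hderiv : ∀ t ∈ I, HasDerivWithinAt ρ (ρ' t) I t)
    (hherm : ∀ t ∈ I, (ρ t).IsHermitian)
    (htr : ∀ t ∈ I, (ρ t).trace = 0)
    (heq : ∀ t ∈ I, ρ' t =
      -Complex.I • mcomm ((Bx t : ℂ) • σx + (By t : ℂ) • σy) (ρ t)
        + (Γ : ℂ) • (σz * ρ t * σz - ρ t)
        - (((Γ : ℂ) + (γ : ℂ)) * (σz * ρ t).trace) • σz) :
    (∀ t ∈ I, ((σx * ρ t).trace).im = 0 ∧ ((σy * ρ t).trace).im = 0 ∧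
      ((σz * ρ t).trace).im = 0) ∧
    (∀ t ∈ I, HasDerivWithinAt (fun s => ((σx * ρ s).trace).re)
      (2 * By t * ((σz * ρ t).trace).re - 2 * Γ * ((σx * ρ t).trace).re) I t) ∧
    (∀ t ∈ I, HasDerivWithinAt (fun s => ((σy * ρ s).trace).re)
      (-(2 * Bx t * ((σz * ρ t).trace).re) - 2 * Γ * ((σy * ρ t).trace).re) I t) ∧
    (∀ t ∈ I, HasDerivWithinAt (fun s => ((σz * ρ s).trace).re)
      (2 * Bx t * ((σy * ρ t).trace).re - 2 * By t * ((σx * ρ t).trace).re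
        - 2 * (Γ + γ) * ((σz * ρ t).trace).re) I t) := by
  have key : ∀ t ∈ I,
      (((σx * ρ t).trace).im = 0 ∧ ((σy * ρ t).trace).im = 0 ∧ ((σz * ρ t).trace).im = 0) ∧
      ((σx * ρ' t).trace).re
        = 2 * By t * ((σz * ρ t).trace).re - 2 * Γ * ((σx * ρ t).trace).re ∧
      ((σy * ρ' t).trace).re
        = -(2 * Bx t * ((σz * ρ t).trace).re) - 2 * Γ * ((σy * ρ t).trace).re ∧
      ((σz * ρ' t).trace).re
        = 2 * Bx t * ((σy * ρ t).trace).re - 2 * By t * ((σx * ρ t).trace).re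
          - 2 * (Γ + γ) * ((σz * ρ t).trace).re := by
    intro t ht
    have h10 : ρ t 1 0 = star (ρ t 0 1) := ((hherm t ht).apply 1 0).symm
    have h00 : (ρ t 0 0).im = 0 := by
      have := (hherm t ht).apply 0 0; rw [Complex.ext_iff] at this
      have := this.2; simp at this; linarith
    have h11 : ρ t 1 1 = - ρ t 0 0 := by
      have := htr t ht; rw [Matrix.trace_fin_two] at this; linear_combination this
    rw [heq t ht]
    refine ⟨⟨?_, ?_, ?_⟩, ?_, ?_, ?_⟩ <;>
    · simp only [mcomm, σx, σy, σz, Matrix.trace_fin_two, Matrix.mul_apply, Fin.sum_univ_two,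
        Matrix.add_apply, Matrix.sub_apply, Matrix.smul_apply, Matrix.cons_val',
        Matrix.cons_val_zero, Matrix.cons_val_one, Matrix.head_cons, Matrix.empty_val',
        Matrix.cons_val_fin_one, Matrix.head_fin_const, Matrix.of_apply, h10, h11, smul_eq_mul]
      simp [Complex.ext_iff, h00]
      try ring
  refine ⟨fun t ht => (key t ht).1, fun t ht => ?_, fun t ht => ?_, fun t ht => ?_⟩
  · have := aux_deriv_trace_re σx (hderiv t ht)
    rwa [(key t ht).2.1] at this
  · have := aux_deriv_trace_re σy (hderiv t ht)
    rwa [(key t ht).2.2.1] at this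
  · have := aux_deriv_trace_re σz (hderiv t ht)
    rwa [(key t ht).2.2.2] at this
end

section
/- Let Γ > 0, γ > 0, let B_x, B_y : I → ℝ be continuous on an interval I ⊆ ℝ, and let ρ̃ : I → M₂(ℂ) be differentiable such that for each t ∈ I, ρ̃(t) is Hermitian with tr(ρ̃(t)) = 0 and ρ̃'(t) = −i[B_x(t)σ_x + B_y(t)σ_y, ρ̃(t)] + Γ(σ_z ρ̃(t) σ_z − ρ̃(t)) − (Γ+γ)σ_z·tr(σ_z ρ̃(t)). Then the function t ↦ tr(ρ̃(t)²) is real-valued and differentiable on I with derivative d/dt tr(ρ̃(t)²) = −4Γ·tr(ρ̃(t)²) − 2γ·(tr(σ_z ρ̃(t)))². -/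
open Matrix MeasureTheory Filter Set

attribute [local instance] Matrix.normedAddCommGroup Matrix.normedSpace

noncomputable def entryCLM (i j : Fin 2) : Matrix (Fin 2) (Fin 2) ℂ →L[ℝ] ℂ :=
  (ContinuousLinearMap.proj j).comp (ContinuousLinearMap.proj (R := ℝ) (φ := fun _ : Fin 2 => Fin 2 → ℂ) i)

/-- Lyapunov derivative along the forward error equation:
`d/dt tr(ρ̃²) = −4Γ tr(ρ̃²) − 2γ (tr(σz ρ̃))²`. -/
theorem lyapunov_derivative_forward
    (Γ γ : ℝ) (hΓ : 0 < Γ) (hγ : 0 < γ)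
    (I : Set ℝ) (hI : I.OrdConnected)
    (Bx By : ℝ → ℝ) (hBx : ContinuousOn Bx I) (hBy : ContinuousOn By I)
    (ρ ρ' : ℝ → Matrix (Fin 2) (Fin 2) ℂ)
    (hderiv : ∀ t ∈ I, HasDerivWithinAt ρ (ρ' t) I t)
    (hherm : ∀ t ∈ I, (ρ t).IsHermitian)
    (htr : ∀ t ∈ I, (ρ t).trace = 0)
    (heq : ∀ t ∈ I, ρ' t =
      -Complex.I • mcomm ((Bx t : ℂ) • σx + (By t : ℂ) • σy) (ρ t)
        + (Γ : ℂ) • (σz * ρ t * σz - ρ t)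
        - (((Γ : ℂ) + (γ : ℂ)) * (σz * ρ t).trace) • σz) :
    (∀ t ∈ I, ((ρ t * ρ t).trace).im = 0) ∧
    (∀ t ∈ I, HasDerivWithinAt (fun s => ((ρ s * ρ s).trace).re)
      (-4 * Γ * ((ρ t * ρ t).trace).re - 2 * γ * (((σz * ρ t).trace).re) ^ 2) I t) := by
  have key : ∀ t ∈ I, (ρ t 0 0).im = 0 ∧ ρ t 1 0 = star (ρ t 0 1) ∧ ρ t 1 1 = -ρ t 0 0 := by
    intro t ht
    have h10 : ρ t 1 0 = star (ρ t 0 1) := by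
      have := congrFun (congrFun (hherm t ht).eq 1) 0
      simpa [Matrix.conjTranspose_apply] using this.symm
    have h11 : ρ t 1 1 = -ρ t 0 0 := by
      have := htr t ht
      simp [Matrix.trace_fin_two] at this
      linear_combination this
    have h00 : (ρ t 0 0).im = 0 := by
      have := congrFun (congrFun (hherm t ht).eq 0) 0
      have h' : star (ρ t 0 0) = ρ t 0 0 := by simpa [Matrix.conjTranspose_apply] using this
      have := congrArg Complex.im h'
      simp [Complex.star_def] at this
      linarith
    exact ⟨h00, h10, h11⟩
  constructor
  · intro t ht
    obtain ⟨h00, h10, h11⟩ := key t ht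
    simp [Matrix.trace_fin_two, Matrix.mul_apply, Fin.sum_univ_two, h10, h11,
      Complex.add_im, Complex.mul_im, Complex.star_def, h00]
    ring
  · intro t ht
    have hE : ∀ i j : Fin 2, HasDerivWithinAt (fun s => ρ s i j) (ρ' t i j) I t := by
      intro i j
      exact (entryCLM i j).hasFDerivAt.comp_hasDerivWithinAt t (hderiv t ht)
    have hbuilt : HasDerivWithinAt
        (fun s => (ρ s 0 0 * ρ s 0 0 + ρ s 0 1 * ρ s 1 0 + (ρ s 1 0 * ρ s 0 1 + ρ s 1 1 * ρ s 1 1)).re)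
        ((ρ' t 0 0 * ρ t 0 0 + ρ t 0 0 * ρ' t 0 0 + (ρ' t 0 1 * ρ t 1 0 + ρ t 0 1 * ρ' t 1 0)
          + (ρ' t 1 0 * ρ t 0 1 + ρ t 1 0 * ρ' t 0 1 + (ρ' t 1 1 * ρ t 1 1 + ρ t 1 1 * ρ' t 1 1))).re)
        I t := by
      exact Complex.reCLM.hasFDerivAt.comp_hasDerivWithinAt t
        ((((hE 0 0).mul (hE 0 0)).add ((hE 0 1).mul (hE 1 0))).add
          (((hE 1 0).mul (hE 0 1)).add ((hE 1 1).mul (hE 1 1))))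
    have hfun : (fun s => ((ρ s * ρ s).trace).re) =
        (fun s => (ρ s 0 0 * ρ s 0 0 + ρ s 0 1 * ρ s 1 0 + (ρ s 1 0 * ρ s 0 1 + ρ s 1 1 * ρ s 1 1)).re) := by
      funext s
      simp [Matrix.trace_fin_two, Matrix.mul_apply, Fin.sum_univ_two]
    rw [hfun]
    convert hbuilt using 1
    obtain ⟨h00, h10, h11⟩ := key t ht
    rw [heq t ht]
    simp only [mcomm, σx, σy, σz, Matrix.add_apply, Matrix.sub_apply, Matrix.smul_apply,
      Matrix.mul_apply, Fin.sum_univ_two, Matrix.trace_fin_two, Matrix.cons_val', Matrix.cons_val_zero,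
      Matrix.cons_val_one, Matrix.head_cons, Matrix.head_fin_const, Matrix.empty_val',
      Matrix.cons_val_fin_one, Matrix.of_apply, smul_eq_mul]
    rw [h10, h11]
    set a := ρ t 0 0
    set b := ρ t 0 1
    simp [Complex.ext_iff, Complex.add_re, Complex.add_im, Complex.mul_re, Complex.mul_im,
      Complex.sub_re, Complex.sub_im, Complex.neg_re, Complex.neg_im, Complex.I_re, Complex.I_im,
      Complex.ofReal_re, Complex.ofReal_im, Complex.star_def, h00]
    ring
end

section
/- Let Γ > 0, γ > 0, let B_x, B_y : I → ℝ be continuous on an interval I ⊆ ℝ, and let ρ̃ : I → M₂(ℂ) be differentiable such that for each t ∈ I, ρ̃(t) is Hermitian with tr(ρ̃(t)) = 0 and ρ̃'(t) = i[B_x(t)σ_x + B_y(t)σ_y, ρ̃(t)] − Γ(σ_z ρ̃(t) σ_z − ρ̃(t)) + (Γ−γ)σ_z·tr(σ_z ρ̃(t)). Then the function t ↦ tr(ρ̃(t)²) is real-valued and differentiable on I with derivative d/dt tr(ρ̃(t)²) = 4Γ·tr(ρ̃(t)²) − 2γ·(tr(σ_z ρ̃(t)))². -/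
open Matrix MeasureTheory Filter Set

attribute [local instance] Matrix.normedAddCommGroup Matrix.normedSpace

/-!
Along the flow, `d/dt tr(ρ²) = 2 tr(ρ ρ')`. The commutator term contributes nothing by cyclicity
of the trace, and for a traceless 2×2 matrix the identity `tr(X²) = tr(X)² - 2 det X`, applied to
`X = σz ρ` and to `X = ρ`, gives `tr(ρ σz ρ σz) = tr(σz ρ)² - tr(ρ²)`; the two dissipative terms
then combine to `4Γ tr(ρ²) - 2γ tr(σz ρ)²`. Hermiticity of `ρ` and `σz` makes both traces real.
-/

theorem HasDerivWithinAt.matrix_trace_mul {n : Type*} [Fintype n] {u v : ℝ → Matrix n n ℂ}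
    {u' v' : Matrix n n ℂ} {s : Set ℝ} {x : ℝ}
    (hu : HasDerivWithinAt u u' s x) (hv : HasDerivWithinAt v v' s x) :
    HasDerivWithinAt (fun t => (u t * v t).trace) ((u x * v').trace + (u' * v x).trace) s x :=
  ((mulLinearMap ℝ).compr₂ (traceLinearMap n ℝ ℂ)).toContinuousBilinearMap
    |>.hasDerivWithinAt_of_bilinear hu hv

theorem Matrix.IsHermitian.im_trace_mul {n : Type*} [Fintype n] {A B : Matrix n n ℂ}
    (hA : A.IsHermitian) (hB : B.IsHermitian) : (A * B).trace.im = 0 := by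
  rw [← Complex.conj_eq_iff_im, ← Complex.star_def, ← trace_conjTranspose, conjTranspose_mul,
    hA.eq, hB.eq, trace_mul_comm]

theorem isHermitian_σz : σz.IsHermitian := by
  ext i j
  fin_cases i <;> fin_cases j <;> simp [σz]

theorem trace_mul_mcomm_self (A M : Matrix (Fin 2) (Fin 2) ℂ) : (M * mcomm A M).trace = 0 := by
  rw [mcomm, Matrix.mul_sub, trace_sub, ← Matrix.mul_assoc, ← Matrix.mul_assoc, trace_mul_cycle,
    sub_self]

theorem trace_mul_σz_mul_mul_σz {M : Matrix (Fin 2) (Fin 2) ℂ} (hM : M.trace = 0) :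
    (M * (σz * M * σz)).trace = (σz * M).trace ^ 2 - (M * M).trace := by
  obtain ⟨a, b, c, d, rfl⟩ : ∃ a b c d, M = !![a, b; c, d] := ⟨_, _, _, _, eta_fin_two M⟩
  obtain rfl : d = -a := by rw [trace_fin_two_of] at hM; linear_combination hM
  simp only [σz, mul_fin_two, trace_fin_two_of]
  ring

noncomputable def backwardField (Γ γ : ℝ) (H M : Matrix (Fin 2) (Fin 2) ℂ) :
    Matrix (Fin 2) (Fin 2) ℂ :=
  Complex.I • mcomm H M - (Γ : ℂ) • (σz * M * σz - M)
    + (((Γ : ℂ) - (γ : ℂ)) * (σz * M).trace) • σz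

theorem two_mul_trace_mul_backwardField (Γ γ : ℝ) (H : Matrix (Fin 2) (Fin 2) ℂ)
    {M : Matrix (Fin 2) (Fin 2) ℂ} (hM : M.trace = 0) :
    2 * (M * backwardField Γ γ H M).trace =
      4 * Γ * (M * M).trace - 2 * γ * (σz * M).trace ^ 2 := by
  simp only [backwardField, Matrix.mul_add, Matrix.mul_sub, Matrix.mul_smul, trace_add,
    trace_sub, trace_smul, trace_mul_mcomm_self, trace_mul_σz_mul_mul_σz hM, trace_mul_comm M σz,
    smul_eq_mul]
  ring

theorem lyapunov_derivative_backward_general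
    (Γ γ : ℝ)
    (I : Set ℝ)
    (Bx By : ℝ → ℝ)
    (ρ ρ' : ℝ → Matrix (Fin 2) (Fin 2) ℂ)
    (hderiv : ∀ t ∈ I, HasDerivWithinAt ρ (ρ' t) I t)
    (hherm : ∀ t ∈ I, (ρ t).IsHermitian)
    (htr : ∀ t ∈ I, (ρ t).trace = 0)
    (heq : ∀ t ∈ I, ρ' t =
      Complex.I • mcomm ((Bx t : ℂ) • σx + (By t : ℂ) • σy) (ρ t)
        - (Γ : ℂ) • (σz * ρ t * σz - ρ t)
        + (((Γ : ℂ) - (γ : ℂ)) * (σz * ρ t).trace) • σz) :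
    (∀ t ∈ I, ((ρ t * ρ t).trace).im = 0) ∧
    (∀ t ∈ I, HasDerivWithinAt (fun s => ((ρ s * ρ s).trace).re)
      (4 * Γ * ((ρ t * ρ t).trace).re - 2 * γ * (((σz * ρ t).trace).re) ^ 2) I t) := by
  refine ⟨fun t ht => (hherm t ht).im_trace_mul (hherm t ht), fun t ht => ?_⟩
  have hsq : HasDerivWithinAt (fun s => ((ρ s * ρ s).trace).re)
      ((ρ t * ρ' t).trace + (ρ' t * ρ t).trace).re I t :=
    Complex.reCLM.hasFDerivAt.comp_hasDerivWithinAt t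
      ((hderiv t ht).matrix_trace_mul (hderiv t ht))
  have hz : (((σz * ρ t).trace.re : ℝ) : ℂ) = (σz * ρ t).trace :=
    Complex.conj_eq_iff_re.mp <|
      Complex.conj_eq_iff_im.mpr (isHermitian_σz.im_trace_mul (hherm t ht))
  refine hsq.congr_deriv ?_
  rw [trace_mul_comm (ρ' t), ← two_mul, heq t ht,
    ← backwardField, two_mul_trace_mul_backwardField _ _ _ (htr t ht), ← hz]
  simp [← Complex.ofReal_pow]

/-- Lyapunov derivative along the backward error equation:
`d/dt tr(ρ̃²) = 4Γ tr(ρ̃²) − 2γ (tr(σz ρ̃))²`. -/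
theorem lyapunov_derivative_backward
    (Γ γ : ℝ) (hΓ : 0 < Γ) (hγ : 0 < γ)
    (I : Set ℝ) (hI : I.OrdConnected)
    (Bx By : ℝ → ℝ) (hBx : ContinuousOn Bx I) (hBy : ContinuousOn By I)
    (ρ ρ' : ℝ → Matrix (Fin 2) (Fin 2) ℂ)
    (hderiv : ∀ t ∈ I, HasDerivWithinAt ρ (ρ' t) I t)
    (hherm : ∀ t ∈ I, (ρ t).IsHermitian)
    (htr : ∀ t ∈ I, (ρ t).trace = 0)
    (heq : ∀ t ∈ I, ρ' t =
      Complex.I • mcomm ((Bx t : ℂ) • σx + (By t : ℂ) • σy) (ρ t)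
        - (Γ : ℂ) • (σz * ρ t * σz - ρ t)
        + (((Γ : ℂ) - (γ : ℂ)) * (σz * ρ t).trace) • σz) :
    (∀ t ∈ I, ((ρ t * ρ t).trace).im = 0) ∧
    (∀ t ∈ I, HasDerivWithinAt (fun s => ((ρ s * ρ s).trace).re)
      (4 * Γ * ((ρ t * ρ t).trace).re - 2 * γ * (((σz * ρ t).trace).re) ^ 2) I t) :=
  lyapunov_derivative_backward_general Γ γ I Bx By ρ ρ' hderiv hherm htr heq
end

section
/- Let T > 0, Γ > 0, γ > 0, let Z : [0,∞) → ℝ be continuous, and let V : [0,∞) → ℝ be continuous and, for each k ∈ ℕ, differentiable on (2kT, (2k+1)T) with V'(t) = −4ΓV(t) − 2γZ(t)² there, and differentiable on ((2k+1)T, 2(k+1)T) with V'(t) = 4ΓV(t) − 2γZ(t)² there. Define g : [0,∞) → ℝ by g(t) = e^{4Γ(t−2kT)} for t ∈ [2kT,(2k+1)T) and g(t) = e^{−4Γ(t−2(k+1)T)} for t ∈ [(2k+1)T, 2(k+1)T), where k = ⌊t/(2T)⌋. Then for every k ∈ ℕ, V(2(k+1)T) − V(2kT) = −2γ·∫_{2kT}^{2(k+1)T}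 g(t)Z(t)² dt, and in particular the sequence (V(2kT))_{k∈ℕ} is decreasing. -/
/-!
On a forward half-cycle `[a, m]`, `V' = -4ΓV - 2γZ²`, so `(e^{4Γ(t-a)} V)' = -2γ e^{4Γ(t-a)} Z²`;
on a backward half-cycle `[m, b]`, `V' = 4ΓV - 2γZ²`, so `(e^{-4Γ(t-b)} V)' = -2γ e^{-4Γ(t-b)} Z²`.
Integrating both and adding, the two values of the integrating factor at the switching time `m`
agree because `m` is the midpoint of `[a, b]`, so the `V m` terms cancel and only `-2γ ∫ g Z²` is
left. The weight `g` is positive, hence `V` decreases over every cycle.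
-/

open Set

theorem exp_mul_sub_exp_mul_eq_integral_of_hasDerivAt {V f : ℝ → ℝ} {a b : ℝ} (c r : ℝ)
    (hab : a ≤ b) (hV : ContinuousOn V (Icc a b)) (hf : ContinuousOn f (Icc a b))
    (hV' : ∀ t ∈ Ioo a b, HasDerivAt V (-c * V t + f t) t) :
    Real.exp (c * (b - r)) * V b - Real.exp (c * (a - r)) * V a
      = ∫ t in a..b, Real.exp (c * (t - r)) * f t := by
  have hexp : Continuous fun t : ℝ => Real.exp (c * (t - r)) := by fun_prop
  refine (intervalIntegral.integral_eq_sub_of_hasDeriv_right_of_le hab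
    (hexp.continuousOn.mul hV) (fun t ht => ?_) ?_).symm
  · have hexp' : HasDerivAt (fun t => Real.exp (c * (t - r))) (Real.exp (c * (t - r)) * c) t :=
      (((hasDerivAt_id' t).sub_const r).const_mul c).exp.congr_deriv (by rw [mul_one])
    exact ((hexp'.mul (hV' t ht)).congr_deriv (by ring)).hasDerivWithinAt
  · exact (hexp.continuousOn.mul hf).intervalIntegrable_of_Icc hab

theorem sub_eq_integral_of_forward_backward {V f g : ℝ → ℝ} {a m b : ℝ} (c : ℝ)
    (ham : a ≤ m) (hmb : m ≤ b) (hmid : m - a = b - m)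
    (hV : ContinuousOn V (Icc a b)) (hf : ContinuousOn f (Icc a b))
    (hforward : ∀ t ∈ Ioo a m, HasDerivAt V (-c * V t + f t) t)
    (hbackward : ∀ t ∈ Ioo m b, HasDerivAt V (c * V t + f t) t)
    (hg_forward : EqOn g (fun t => Real.exp (c * (t - a))) (Icc a m))
    (hg_backward : EqOn g (fun t => Real.exp (-c * (t - b))) (Icc m b)) :
    V b - V a = ∫ t in a..b, g t * f t := by
  have hsub_left : Icc a m ⊆ Icc a b := Icc_subset_Icc le_rfl hmb
  have hsub_right : Icc m b ⊆ Icc a b := Icc_subset_Icc ham le_rfl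
  have hforward_int : ∫ t in a..m, g t * f t = Real.exp (c * (m - a)) * V m - V a := by
    rw [intervalIntegral.integral_congr (g := fun t => Real.exp (c * (t - a)) * f t)
      (fun t ht => by rw [uIcc_of_le ham] at ht; simp only [hg_forward ht]),
      ← exp_mul_sub_exp_mul_eq_integral_of_hasDerivAt c a ham (hV.mono hsub_left) (hf.mono hsub_left)
        hforward]
    simp
  have hbackward_int : ∫ t in m..b, g t * f t = V b - Real.exp (-c * (m - b)) * V m := by
    rw [intervalIntegral.integral_congr (g := fun t => Real.exp (-c * (t - b)) * f t)
      (fun t ht => by rw [uIcc_of_le hmb] at ht; simp only [hg_backward ht]),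
      ← exp_mul_sub_exp_mul_eq_integral_of_hasDerivAt (-c) b hmb (hV.mono hsub_right) (hf.mono hsub_right)
        (by simpa only [neg_neg] using hbackward)]
    simp
  have hgf_cont {s : Set ℝ} (hs : s ⊆ Icc a b) (u : ℝ → ℝ) (hu : Continuous u)
      (hg : EqOn g u s) : ContinuousOn (fun t => g t * f t) s :=
    (hu.continuousOn.congr hg).mul (hf.mono hs)
  rw [← intervalIntegral.integral_add_adjacent_intervals
      ((hgf_cont hsub_left _ (by fun_prop) hg_forward).intervalIntegrable_of_Icc ham)
      ((hgf_cont hsub_right _ (by fun_prop) hg_backward).intervalIntegrable_of_Icc hmb),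
    hforward_int, hbackward_int, show c * (m - a) = -c * (m - b) by linear_combination c * hmid]
  ring

section Cycle

variable {T Γ : ℝ} {g : ℝ → ℝ}

theorem eqOn_forward_half (hT : 0 < T) (k : ℕ)
    (hgf : ∀ t ∈ Ico (2*(k:ℝ)*T) ((2*(k:ℝ)+1)*T), g t = Real.exp (4*Γ*(t - 2*(k:ℝ)*T)))
    (hgb : ∀ t ∈ Ico ((2*(k:ℝ)+1)*T) (2*((k:ℝ)+1)*T),
      g t = Real.exp (-4*Γ*(t - 2*((k:ℝ)+1)*T))) :
    EqOn g (fun t => Real.exp (4*Γ*(t - 2*(k:ℝ)*T))) (Icc (2*(k:ℝ)*T) ((2*(k:ℝ)+1)*T)) := by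
  rw [← Ico_insert_right (by linarith)]
  refine forall_insert_of_forall hgf ?_
  rw [hgb _ ⟨le_rfl, by linarith⟩]
  ring_nf

theorem eqOn_backward_half (hT : 0 < T) (k : ℕ)
    (hgb : ∀ t ∈ Ico ((2*(k:ℝ)+1)*T) (2*((k:ℝ)+1)*T),
      g t = Real.exp (-4*Γ*(t - 2*((k:ℝ)+1)*T)))
    (hgf_next : ∀ t ∈ Ico (2*((k + 1 : ℕ):ℝ)*T) ((2*((k + 1 : ℕ):ℝ)+1)*T),
      g t = Real.exp (4*Γ*(t - 2*((k + 1 : ℕ):ℝ)*T))) :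
    EqOn g (fun t => Real.exp (-(4*Γ) * (t - 2*((k:ℝ)+1)*T)))
      (Icc ((2*(k:ℝ)+1)*T) (2*((k:ℝ)+1)*T)) := by
  rw [← Ico_insert_right (by linarith)]
  refine forall_insert_of_forall (fun t ht => by rw [hgb t ht]; ring_nf) ?_
  rw [hgf_next _ ⟨le_of_eq (by push_cast; ring), by push_cast; linarith⟩]
  push_cast
  ring_nf

end Cycle

theorem bfn_lyapunov_cycle_decrease_general
    (T Γ γ : ℝ) (hT : 0 < T) (hγ : 0 < γ)
    (Z V g : ℝ → ℝ)
    (hZ : ContinuousOn Z (Ici 0)) (hV : ContinuousOn V (Ici 0))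
    (hVf : ∀ k : ℕ, ∀ t ∈ Ioo (2*(k:ℝ)*T) ((2*(k:ℝ)+1)*T),
      HasDerivAt V (-4*Γ*V t - 2*γ*(Z t)^2) t)
    (hVb : ∀ k : ℕ, ∀ t ∈ Ioo ((2*(k:ℝ)+1)*T) (2*((k:ℝ)+1)*T),
      HasDerivAt V (4*Γ*V t - 2*γ*(Z t)^2) t)
    (hgf : ∀ k : ℕ, ∀ t ∈ Ico (2*(k:ℝ)*T) ((2*(k:ℝ)+1)*T),
      g t = Real.exp (4*Γ*(t - 2*(k:ℝ)*T)))
    (hgb : ∀ k : ℕ, ∀ t ∈ Ico ((2*(k:ℝ)+1)*T) (2*((k:ℝ)+1)*T),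
      g t = Real.exp (-4*Γ*(t - 2*((k:ℝ)+1)*T))) :
    (∀ k : ℕ, V (2*((k:ℝ)+1)*T) - V (2*(k:ℝ)*T)
      = -2*γ * ∫ t in (2*(k:ℝ)*T)..(2*((k:ℝ)+1)*T), g t * (Z t)^2) ∧
    Antitone (fun k : ℕ => V (2*(k:ℝ)*T)) := by
  have hcycle (k : ℕ) : V (2*((k:ℝ)+1)*T) - V (2*(k:ℝ)*T)
      = -2*γ * ∫ t in (2*(k:ℝ)*T)..(2*((k:ℝ)+1)*T), g t * (Z t)^2 := by
    have hsub : Icc (2*(k:ℝ)*T) (2*((k:ℝ)+1)*T) ⊆ Ici 0 :=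
      fun t ht => le_trans (by positivity) ht.1
    rw [← intervalIntegral.integral_const_mul]
    simp_rw [mul_left_comm (-2*γ)]
    exact sub_eq_integral_of_forward_backward (4*Γ) (by linarith) (by linarith) (by ring)
      (hV.mono hsub) ((continuousOn_const.mul (hZ.pow 2)).mono hsub)
      (fun t ht => (hVf k t ht).congr_deriv (by ring))
      (fun t ht => (hVb k t ht).congr_deriv (by ring))
      (eqOn_forward_half hT k (hgf k) (hgb k)) (eqOn_backward_half hT k (hgb k) (hgf (k + 1)))
  refine ⟨hcycle, antitone_nat_of_succ_le fun k => ?_⟩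
  have hg_nonneg : ∀ t ∈ Icc (2*(k:ℝ)*T) (2*((k:ℝ)+1)*T), 0 ≤ g t := by
    intro t ⟨hat, htb⟩
    rcases le_total t ((2*(k:ℝ)+1)*T) with htm | hmt
    · rw [eqOn_forward_half hT k (hgf k) (hgb k) ⟨hat, htm⟩]; positivity
    · rw [eqOn_backward_half hT k (hgb k) (hgf (k + 1)) ⟨hmt, htb⟩]; positivity
  have hint_nonneg : 0 ≤ ∫ t in (2*(k:ℝ)*T)..(2*((k:ℝ)+1)*T), g t * (Z t)^2 :=
    intervalIntegral.integral_nonneg (by linarith)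
      fun t ht => mul_nonneg (hg_nonneg t ht) (sq_nonneg _)
  push_cast
  linarith [hcycle k, mul_nonneg hγ.le hint_nonneg]

/-- over each back-and-forth cycle the Lyapunov function decreases by
`2γ ∫ g Z²`, hence `(V(2kT))ₖ` is decreasing. -/
theorem bfn_lyapunov_cycle_decrease
    (T Γ γ : ℝ) (hT : 0 < T) (hΓ : 0 < Γ) (hγ : 0 < γ)
    (Z V g : ℝ → ℝ)
    (hZ : ContinuousOn Z (Ici 0)) (hV : ContinuousOn V (Ici 0))
    (hVf : ∀ k : ℕ, ∀ t ∈ Ioo (2*(k:ℝ)*T) ((2*(k:ℝ)+1)*T),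
      HasDerivAt V (-4*Γ*V t - 2*γ*(Z t)^2) t)
    (hVb : ∀ k : ℕ, ∀ t ∈ Ioo ((2*(k:ℝ)+1)*T) (2*((k:ℝ)+1)*T),
      HasDerivAt V (4*Γ*V t - 2*γ*(Z t)^2) t)
    (hgf : ∀ k : ℕ, ∀ t ∈ Ico (2*(k:ℝ)*T) ((2*(k:ℝ)+1)*T),
      g t = Real.exp (4*Γ*(t - 2*(k:ℝ)*T)))
    (hgb : ∀ k : ℕ, ∀ t ∈ Ico ((2*(k:ℝ)+1)*T) (2*((k:ℝ)+1)*T),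
      g t = Real.exp (-4*Γ*(t - 2*((k:ℝ)+1)*T))) :
    (∀ k : ℕ, V (2*((k:ℝ)+1)*T) - V (2*(k:ℝ)*T)
      = -2*γ * ∫ t in (2*(k:ℝ)*T)..(2*((k:ℝ)+1)*T), g t * (Z t)^2) ∧
    Antitone (fun k : ℕ => V (2*(k:ℝ)*T)) :=
  bfn_lyapunov_cycle_decrease_general T Γ γ hT hγ Z V g hZ hV hVf hVb hgf hgb
end

section
/- Let T > 0, Γ > 0, γ > 0, let Z : [0,∞) → ℝ be continuous with Z(t)² ≥ 0, and let V : [0,∞) → ℝ be continuous and nonnegative and, for each k ∈ ℕ, differentiable on (2kT, (2k+1)T) with V'(t) = −4ΓV(t) − 2γZ(t)² there, and differentiable on ((2k+1)T, 2(k+1)T) with V'(t) = 4ΓV(t) − 2γZ(t)² there. Then Z² is integrable on [0,∞) and ∫_0^∞ Z(t)² dt ≤ V(0)/(2γ). -/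
open Set Filter MeasureTheory

/-! Multiplying `V' = ∓4ΓV - 2γZ²` by the integrating factor `e^{±4Γt}` turns each half-period
into an exact identity for a weighted integral of `2γZ²`. Bounding the weight by its extreme value
gives `2γ∫Z² ≤ V(2kT) - e^{4ΓT}V((2k+1)T)` on the decay phase and
`2γ∫Z² ≤ e^{4ΓT}V((2k+1)T) - V(2(k+1)T)` on the growth phase, so the factors `e^{4ΓT}` cancel and
over a whole period `2γ∫Z²` is at most the drop of `V`. The partial integrals telescope to at most
`V(0) - V(2nT) ≤ V(0)`, and since `Z² ≥ 0` this bound passes to the integral over `[0,∞)`. -/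

section VariationOfConstants

variable {V f : ℝ → ℝ} {a b c : ℝ}

theorem integral_exp_mul_eq_of_hasDerivAt (hab : a ≤ b) (hV : ContinuousOn V (Icc a b))
    (hf : ContinuousOn f (Icc a b)) (hV' : ∀ t ∈ Ioo a b, HasDerivAt V (c * V t - f t) t) :
    ∫ t in a..b, Real.exp (-c * (t - a)) * f t = V a - Real.exp (-c * (b - a)) * V b := by
  have hW : ∀ t ∈ Ioo a b, HasDerivAt (fun t => Real.exp (-c * (t - a)) * V t)
      (-(Real.exp (-c * (t - a)) * f t)) t := by
    intro t ht
    refine ((((hasDerivAt_id t).sub_const a).const_mul (-c)).exp.mul (hV' t ht)).congr_deriv ?_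
    simp only [id, mul_one]
    ring
  have hint : IntervalIntegrable (fun t => -(Real.exp (-c * (t - a)) * f t)) volume a b :=
    ContinuousOn.intervalIntegrable (by rw [uIcc_of_le hab]; fun_prop)
  have hFTC := intervalIntegral.integral_eq_sub_of_hasDerivAt_of_le hab (by fun_prop) hW hint
  simp only [intervalIntegral.integral_neg, sub_self, mul_zero, Real.exp_zero, one_mul] at hFTC
  linarith

theorem integral_le_sub_of_hasDerivAt_of_nonpos (hab : a ≤ b) (hc : c ≤ 0)
    (hV : ContinuousOn V (Icc a b)) (hf : ContinuousOn f (Icc a b))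
    (hf₀ : ∀ t ∈ Icc a b, 0 ≤ f t) (hV' : ∀ t ∈ Ioo a b, HasDerivAt V (c * V t - f t) t) :
    ∫ t in a..b, f t ≤ V a - Real.exp (-c * (b - a)) * V b := by
  rw [← integral_exp_mul_eq_of_hasDerivAt hab hV hf hV']
  refine intervalIntegral.integral_mono_on hab (hf.intervalIntegrable_of_Icc hab)
    (ContinuousOn.intervalIntegrable_of_Icc hab (by fun_prop)) fun t ht => ?_
  have hweight : 1 ≤ Real.exp (-c * (t - a)) :=
    Real.one_le_exp (mul_nonneg (neg_nonneg.mpr hc) (sub_nonneg.mpr ht.1))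
  nlinarith [hf₀ t ht]

theorem integral_le_sub_of_hasDerivAt_of_nonneg (hab : a ≤ b) (hc : 0 ≤ c)
    (hV : ContinuousOn V (Icc a b)) (hf : ContinuousOn f (Icc a b))
    (hf₀ : ∀ t ∈ Icc a b, 0 ≤ f t) (hV' : ∀ t ∈ Ioo a b, HasDerivAt V (c * V t - f t) t) :
    ∫ t in a..b, f t ≤ Real.exp (c * (b - a)) * V a - V b := by
  have hweighted :
      Real.exp (-c * (b - a)) * ∫ t in a..b, f t ≤ V a - Real.exp (-c * (b - a)) * V b := by
    rw [← integral_exp_mul_eq_of_hasDerivAt hab hV hf hV', ← intervalIntegral.integral_const_mul]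
    refine intervalIntegral.integral_mono_on hab
      (ContinuousOn.intervalIntegrable_of_Icc hab (by fun_prop))
      (ContinuousOn.intervalIntegrable_of_Icc hab (by fun_prop)) fun t ht => ?_
    have hweight : Real.exp (-c * (b - a)) ≤ Real.exp (-c * (t - a)) :=
      Real.exp_le_exp.mpr (by nlinarith [ht.2])
    nlinarith [hf₀ t ht]
  have hinv : Real.exp (c * (b - a)) * Real.exp (-c * (b - a)) = 1 := by
    rw [← Real.exp_add]; simp
  calc ∫ t in a..b, f t
        = Real.exp (c * (b - a)) * (Real.exp (-c * (b - a)) * ∫ t in a..b, f t) := by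
        rw [← mul_assoc, hinv, one_mul]
    _ ≤ Real.exp (c * (b - a)) * (V a - Real.exp (-c * (b - a)) * V b) := by gcongr
    _ = Real.exp (c * (b - a)) * V a - V b := by rw [mul_sub, ← mul_assoc, hinv, one_mul]

end VariationOfConstants

theorem integral_le_sub_of_decay_then_growth {V f : ℝ → ℝ} {a b d c : ℝ} (hab : a ≤ b)
    (hlen : b - a = d - b) (hc : 0 ≤ c) (hV : ContinuousOn V (Icc a d))
    (hf : ContinuousOn f (Icc a d)) (hf₀ : ∀ t ∈ Icc a d, 0 ≤ f t)
    (hdecay : ∀ t ∈ Ioo a b, HasDerivAt V (-c * V t - f t) t)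
    (hgrowth : ∀ t ∈ Ioo b d, HasDerivAt V (c * V t - f t) t) :
    ∫ t in a..d, f t ≤ V a - V d := by
  have hbd : b ≤ d := by linarith
  have hsub₁ : Icc a b ⊆ Icc a d := Icc_subset_Icc_right hbd
  have hsub₂ : Icc b d ⊆ Icc a d := Icc_subset_Icc_left hab
  have hdecay_bound := integral_le_sub_of_hasDerivAt_of_nonpos hab (neg_nonpos.mpr hc)
    (hV.mono hsub₁) (hf.mono hsub₁) (fun t ht => hf₀ t (hsub₁ ht)) hdecay
  have hgrowth_bound := integral_le_sub_of_hasDerivAt_of_nonneg hbd hc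
    (hV.mono hsub₂) (hf.mono hsub₂) (fun t ht => hf₀ t (hsub₂ ht)) hgrowth
  rw [neg_neg, hlen] at hdecay_bound
  rw [← intervalIntegral.integral_add_adjacent_intervals
    ((hf.mono hsub₁).intervalIntegrable_of_Icc hab) ((hf.mono hsub₂).intervalIntegrable_of_Icc hbd)]
  linarith

theorem integral_le_sub_of_integral_le_sub_succ {f V : ℝ → ℝ} {x : ℕ → ℝ}
    (hf : ∀ k, IntervalIntegrable f volume (x k) (x (k + 1)))
    (hstep : ∀ k, ∫ t in x k..x (k + 1), f t ≤ V (x k) - V (x (k + 1))) (n : ℕ) :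
    ∫ t in x 0..x n, f t ≤ V (x 0) - V (x n) := by
  rw [← intervalIntegral.sum_integral_adjacent_intervals fun k _ => hf k,
    ← Finset.sum_range_sub' (fun k => V (x k))]
  exact Finset.sum_le_sum fun k _ => hstep k

theorem integrableOn_Ici_and_integral_le_of_intervalIntegral_le {ι : Type*} {l : Filter ι}
    [l.NeBot] [l.IsCountablyGenerated] {f : ℝ → ℝ} {x : ι → ℝ} {a C : ℝ} (hf₀ : ∀ t, 0 ≤ f t)
    (hf : ∀ i, IntegrableOn f (Ioc a (x i))) (hx : Tendsto x l atTop)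
    (hle : ∀ i, ∫ t in a..x i, f t ≤ C) :
    IntegrableOn f (Ici a) ∧ ∫ t in Ici a, f t ≤ C := by
  have hIoi : IntegrableOn f (Ioi a) :=
    integrableOn_Ioi_of_intervalIntegral_norm_bounded C a hf hx <| Eventually.of_forall fun i => by
      simpa only [Real.norm_of_nonneg (hf₀ _)] using hle i
  rw [integrableOn_Ici_iff_integrableOn_Ioi, integral_Ici_eq_integral_Ioi]
  exact ⟨hIoi, le_of_tendsto (intervalIntegral_tendsto_integral_Ioi a hIoi hx)
    (Eventually.of_forall hle)⟩

theorem bfn_measurement_error_integrable_general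
    (T Γ γ : ℝ) (hT : 0 < T) (hΓ : 0 < Γ) (hγ : 0 < γ)
    (Z V : ℝ → ℝ)
    (hZ : ContinuousOn Z (Ici 0))
    (hV : ContinuousOn V (Ici 0)) (hVnonneg : ∀ t ∈ Ici (0:ℝ), 0 ≤ V t)
    (hVf : ∀ k : ℕ, ∀ t ∈ Ioo (2*(k:ℝ)*T) ((2*(k:ℝ)+1)*T),
      HasDerivAt V (-4*Γ*V t - 2*γ*(Z t)^2) t)
    (hVb : ∀ k : ℕ, ∀ t ∈ Ioo ((2*(k:ℝ)+1)*T) (2*((k:ℝ)+1)*T),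
      HasDerivAt V (4*Γ*V t - 2*γ*(Z t)^2) t) :
    IntegrableOn (fun t => (Z t)^2) (Ici 0) ∧
    (∫ t in Ici (0:ℝ), (Z t)^2) ≤ V 0 / (2*γ) := by
  set x : ℕ → ℝ := fun k => 2 * k * T
  have hx₀ : ∀ k, 0 ≤ x k := fun k => by positivity
  have hx_succ : ∀ k : ℕ, x (k + 1) = 2 * ((k : ℝ) + 1) * T := fun k => by push_cast [x]; rfl
  have hf : ContinuousOn (fun t => 2 * γ * Z t ^ 2) (Ici 0) := by fun_prop
  have hperiod (k : ℕ) : ∫ t in x k..x (k + 1), 2 * γ * Z t ^ 2 ≤ V (x k) - V (x (k + 1)) := by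
    have hsub : Icc (x k) (x (k + 1)) ⊆ Ici 0 := ordConnected_Ici.out (hx₀ k) (hx₀ (k + 1))
    rw [hx_succ] at hsub ⊢
    refine integral_le_sub_of_decay_then_growth (b := (2 * k + 1) * T) (c := 4 * Γ)
      (by nlinarith) (by ring) (by positivity) (hV.mono hsub) (hf.mono hsub)
      (fun t _ => by positivity) (fun t ht => (hVf k t ht).congr_deriv (by ring)) (hVb k)
  have hpartial (n : ℕ) : ∫ t in (0 : ℝ)..x n, Z t ^ 2 ≤ V 0 / (2 * γ) := by
    have htelescope := integral_le_sub_of_integral_le_sub_succ (fun k =>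
      (hf.mono (ordConnected_Ici.uIcc_subset (hx₀ k) (hx₀ (k + 1)))).intervalIntegrable) hperiod n
    rw [intervalIntegral.integral_const_mul] at htelescope
    simp only [x, CharP.cast_eq_zero, mul_zero, zero_mul] at htelescope
    rw [le_div_iff₀ (by positivity)]
    nlinarith [hVnonneg (x n) (hx₀ n)]
  have hx : Tendsto x atTop atTop :=
    (tendsto_natCast_atTop_atTop.const_mul_atTop two_pos).atTop_mul_const hT
  exact integrableOn_Ici_and_integral_le_of_intervalIntegral_le (fun t => sq_nonneg (Z t))
    (fun n => ((hZ.pow 2).mono Icc_subset_Ici_self).integrableOn_Icc.mono_set Ioc_subset_Icc_self)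
    hx hpartial

/-- the measurement error `Z²` is integrable on `[0,∞)` with
`∫₀^∞ Z² ≤ V(0)/(2γ)`. -/
theorem bfn_measurement_error_integrable
    (T Γ γ : ℝ) (hT : 0 < T) (hΓ : 0 < Γ) (hγ : 0 < γ)
    (Z V : ℝ → ℝ)
    (hZ : ContinuousOn Z (Ici 0)) (hZsq : ∀ t : ℝ, 0 ≤ (Z t)^2)
    (hV : ContinuousOn V (Ici 0)) (hVnonneg : ∀ t ∈ Ici (0:ℝ), 0 ≤ V t)
    (hVf : ∀ k : ℕ, ∀ t ∈ Ioo (2*(k:ℝ)*T) ((2*(k:ℝ)+1)*T),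
      HasDerivAt V (-4*Γ*V t - 2*γ*(Z t)^2) t)
    (hVb : ∀ k : ℕ, ∀ t ∈ Ioo ((2*(k:ℝ)+1)*T) (2*((k:ℝ)+1)*T),
      HasDerivAt V (4*Γ*V t - 2*γ*(Z t)^2) t) :
    IntegrableOn (fun t => (Z t)^2) (Ici 0) ∧
    (∫ t in Ici (0:ℝ), (Z t)^2) ≤ V 0 / (2*γ) :=
  bfn_measurement_error_integrable_general T Γ γ hT hΓ hγ Z V hZ hV hVnonneg hVf hVb
end

section
/- Let T > 0 and let S = ⋃_{k∈ℕ} (kT, (k+1)T) ⊆ (0,∞). Let Z : [0,∞) → ℝ be continuous, differentiable at every point of S, and suppose there is M ≥ 0 with |Z'(t)| ≤ M for all t ∈ S. If ∫_0^∞ Z(t)² dt < ∞, then Z(t) → 0 as t → ∞. -/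
/-!
Between consecutive grid points the mean value theorem bounds the slope of `Z` by `M`, and by
continuity these bounds glue into a global `M`-Lipschitz estimate on `[0, ∞)`. If `|Z t| ≥ ε` at
arbitrarily late times `t`, the Lipschitz bound keeps `Z²` above `(ε / 2)²` on an interval of fixed
length after each such `t`, which contradicts the vanishing of the tail integrals of `Z²`.
-/

open Set Filter MeasureTheory
open scoped Topology NNReal

theorem lipschitzOnWith_singleton {α β : Type*} [PseudoEMetricSpace α] [PseudoEMetricSpace β]
    (K : ℝ≥0) (f : α → β) (a : α) : LipschitzOnWith K f {a} := by
  rintro x rfl y rfl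
  simp

theorem LipschitzOnWith.Icc_trans {E : Type*} [PseudoMetricSpace E] {f : ℝ → E} {K : ℝ≥0}
    {a b c : ℝ} (hab : LipschitzOnWith K f (Icc a b)) (hbc : LipschitzOnWith K f (Icc b c)) :
    LipschitzOnWith K f (Icc a c) := by
  rw [lipschitzOnWith_iff_dist_le_mul] at *
  intro x hx y hy
  wlog hxy : x ≤ y generalizing x y
  · rw [dist_comm, dist_comm x]
    exact this y hy x hx (le_of_not_ge hxy)
  rcases le_total y b with hyb | hby
  · exact hab x ⟨hx.1, hxy.trans hyb⟩ y ⟨hy.1, hyb⟩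
  rcases le_total b x with hbx | hxb
  · exact hbc x ⟨hbx, hx.2⟩ y ⟨hby, hy.2⟩
  calc dist (f x) (f y) ≤ dist (f x) (f b) + dist (f b) (f y) := dist_triangle _ _ _
    _ ≤ K * dist x b + K * dist b y :=
      add_le_add (hab x ⟨hx.1, hxb⟩ b ⟨hx.1.trans hxb, le_rfl⟩)
        (hbc b ⟨le_rfl, hby.trans hy.2⟩ y ⟨hby, hy.2⟩)
    _ = K * dist x y := by
      rw [Real.dist_eq, Real.dist_eq, Real.dist_eq, abs_of_nonpos (by linarith),
        abs_of_nonpos (by linarith), abs_of_nonpos (by linarith)]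
      ring

theorem lipschitzOnWith_Icc_of_hasDerivAt_Ioo {E : Type*} [NormedAddCommGroup E] [NormedSpace ℝ E]
    {f f' : ℝ → E} {K : ℝ≥0} {a b : ℝ} (hcont : ContinuousOn f (Icc a b))
    (hderiv : ∀ x ∈ Ioo a b, HasDerivAt f (f' x) x) (hbound : ∀ x ∈ Ioo a b, ‖f' x‖ ≤ K) :
    LipschitzOnWith K f (Icc a b) := by
  rcases eq_or_ne a b with rfl | hab
  · simpa using lipschitzOnWith_singleton K f a
  have hIoo : LipschitzOnWith K f (Ioo a b) :=
    (convex_Ioo a b).lipschitzOnWith_of_nnnorm_hasDerivWithin_le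
      (fun x hx => (hderiv x hx).hasDerivWithinAt) (fun x hx => hbound x hx)
  rw [← closure_Ioo hab] at hcont ⊢
  exact hIoo.closure hcont

theorem LipschitzOnWith.Ici_of_Icc_nat_mul {E : Type*} [PseudoMetricSpace E] {f : ℝ → E}
    {K : ℝ≥0} {T : ℝ} (hT : 0 < T)
    (h : ∀ k : ℕ, LipschitzOnWith K f (Icc (k * T) ((k + 1) * T))) :
    LipschitzOnWith K f (Ici 0) := by
  have hIcc : ∀ n : ℕ, LipschitzOnWith K f (Icc 0 (n * T)) := by
    intro n
    induction n with
    | zero => simpa using lipschitzOnWith_singleton K f 0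
    | succ n ih => exact_mod_cast ih.Icc_trans (h n)
  rw [lipschitzOnWith_iff_dist_le_mul]
  intro x hx y hy
  obtain ⟨n, hn⟩ := exists_nat_ge (max x y / T)
  rw [div_le_iff₀ hT] at hn
  exact (lipschitzOnWith_iff_dist_le_mul.1 (hIcc n)) x ⟨hx, (le_max_left x y).trans hn⟩
    y ⟨hy, (le_max_right x y).trans hn⟩

theorem tendsto_setIntegral_Ici_atTop_zero {E : Type*} [NormedAddCommGroup E] [NormedSpace ℝ E]
    {μ : Measure ℝ} {f : ℝ → E} {a : ℝ} (hf : IntegrableOn f (Ici a) μ) :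
    Tendsto (fun t => ∫ x in Ici t, f x ∂μ) atTop (𝓝 0) := by
  have h := tendsto_setIntegral_of_antitone (fun t => measurableSet_Ici)
    (fun _ _ hst => Ici_subset_Ici.2 hst) ⟨a, hf⟩
  have hempty : ⋂ t : ℝ, Ici t = ∅ :=
    eq_empty_of_forall_notMem fun x hx => (mem_iInter.1 hx (x + 1)).not_gt (lt_add_one x)
  simpa [hempty] using h

theorem tendsto_zero_of_uniformContinuousOn_of_integrableOn_sq {Z : ℝ → ℝ} {a : ℝ}
    (hZ : UniformContinuousOn Z (Ici a)) (hint : IntegrableOn (fun t => Z t ^ 2) (Ici a)) :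
    Tendsto Z atTop (𝓝 0) := by
  rw [Metric.tendsto_atTop]
  by_contra! hfar
  obtain ⟨ε, hε, hfar⟩ := hfar
  obtain ⟨δ, hδ, hclose⟩ := Metric.uniformContinuousOn_iff.1 hZ (ε / 2) (half_pos hε)
  obtain ⟨N, hN⟩ := ((tendsto_setIntegral_Ici_atTop_zero hint).eventually
    (gt_mem_nhds (by positivity : 0 < δ / 2 * (ε / 2) ^ 2))).exists_forall_of_atTop
  set t₀ := max N a
  obtain ⟨t, ht, hZt⟩ := hfar t₀
  rw [Real.dist_eq, sub_zero] at hZt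
  have hta : a ≤ t := (le_max_right N a).trans ht
  have hlarge : ∀ s ∈ Icc t (t + δ / 2), (ε / 2) ^ 2 ≤ Z s ^ 2 := by
    intro s hs
    have hdist : dist (Z t) (Z s) < ε / 2 := by
      refine hclose t hta s (hta.trans hs.1) ?_
      rw [Real.dist_eq, abs_sub_comm, abs_of_nonneg (by linarith [hs.1])]
      linarith [hs.2]
    rw [Real.dist_eq] at hdist
    have : ε / 2 ≤ |Z s| := by linarith [abs_sub_abs_le_abs_sub (Z t) (Z s)]
    simpa using pow_le_pow_left₀ (by positivity) this 2
  have hlower : δ / 2 * (ε / 2) ^ 2 ≤ ∫ s in Icc t (t + δ / 2), Z s ^ 2 := by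
    have := setIntegral_ge_of_const_le_real measurableSet_Icc (by simp) hlarge
      (hint.mono_set fun s hs => hta.trans hs.1)
    rwa [Real.volume_real_Icc_of_le (by linarith), add_sub_cancel_left, mul_comm] at this
  have hupper : ∫ s in Icc t (t + δ / 2), Z s ^ 2 ≤ ∫ s in Ici t₀, Z s ^ 2 :=
    setIntegral_mono_set (hint.mono_set (Ici_subset_Ici.2 (le_max_right N a)))
      (Eventually.of_forall fun s => sq_nonneg (Z s))
      ((Icc_subset_Ici_iff (by linarith)).2 ht).eventuallyLE
  linarith [hN t₀ (le_max_left N a)]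

theorem barbalat_piecewise_general
    (T : ℝ) (hT : 0 < T)
    (S : Set ℝ) (hS : S = ⋃ k : ℕ, Ioo ((k:ℝ)*T) (((k:ℝ)+1)*T))
    (Z Z' : ℝ → ℝ)
    (hZc : ContinuousOn Z (Ici 0))
    (hZd : ∀ t ∈ S, HasDerivAt Z (Z' t) t)
    (M : ℝ) (hbound : ∀ t ∈ S, |Z' t| ≤ M)
    (hint : IntegrableOn (fun t => (Z t)^2) (Ici 0)) :
    Tendsto Z atTop (nhds 0) := by
  have hpiece : ∀ k : ℕ, LipschitzOnWith M.toNNReal Z (Icc (k * T) ((k + 1) * T)) := by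
    intro k
    have hkS : Ioo ((k:ℝ)*T) (((k:ℝ)+1)*T) ⊆ S := hS ▸ subset_iUnion_of_subset k subset_rfl
    refine lipschitzOnWith_Icc_of_hasDerivAt_Ioo
      (hZc.mono fun t ht => (by positivity : (0:ℝ) ≤ k * T).trans ht.1)
      (fun t ht => hZd t (hkS ht)) fun t ht => ?_
    rw [Real.norm_eq_abs]
    exact (hbound t (hkS ht)).trans M.le_coe_toNNReal
  exact tendsto_zero_of_uniformContinuousOn_of_integrableOn_sq
    (LipschitzOnWith.Ici_of_Icc_nat_mul hT hpiece).uniformContinuousOn hint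

/-- Barbalat-type lemma. If `Z` is continuous on `[0,∞)`, has a derivative
bounded by `M` off the grid points `kT`, and `Z²` is integrable on `[0,∞)`, then
`Z(t) → 0` as `t → ∞`. -/
theorem barbalat_piecewise
    (T : ℝ) (hT : 0 < T)
    (S : Set ℝ) (hS : S = ⋃ k : ℕ, Ioo ((k:ℝ)*T) (((k:ℝ)+1)*T))
    (Z Z' : ℝ → ℝ)
    (hZc : ContinuousOn Z (Ici 0))
    (hZd : ∀ t ∈ S, HasDerivAt Z (Z' t) t)
    (M : ℝ) (hM : 0 ≤ M) (hbound : ∀ t ∈ S, |Z' t| ≤ M)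
    (hint : IntegrableOn (fun t => (Z t)^2) (Ici 0)) :
    Tendsto Z atTop (nhds 0) :=
  barbalat_piecewise_general T hT S hS Z Z' hZc hZd M hbound hint
end

section
/- Let T > 0 and let S = ⋃_{k∈ℕ} (kT, (k+1)T) ⊆ (0,∞). Let Z : [0,∞) → ℝ be continuous, twice differentiable at every point of S, and suppose there is M ≥ 0 with |Z''(t)| ≤ M for all t ∈ S. If Z(t) → 0 as t → ∞, then Z'(t) → 0 as t → ∞ along S, i.e., for every ε > 0 there exists t₀ such that |Z'(t)| < ε for all t ∈ S with t ≥ t₀. -/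
/-!
On a window `[a, a + h]` inside one of the intervals of `S`, the mean value theorem gives a point
where `Z'` equals the slope of `Z`, and the bound on `Z''` keeps `Z'` within `M h` of that slope on
the whole window. Far out, `Z` is smaller than `ε h / 4`, so the slope is below `ε / 2`; choosing
`h` with `M h < ε / 2` first gives `|Z'| < ε`. Every point of `S` lies in such a window as soon as
`2 h < T`.
-/

open Set Filter Topology

theorem abs_deriv_sub_slope_le {f f' f'' : ℝ → ℝ} {a b M x : ℝ} (hab : a < b)
    (hf : ∀ y ∈ Icc a b, HasDerivAt f (f' y) y)
    (hf' : ∀ y ∈ Icc a b, HasDerivAt f' (f'' y) y)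
    (hf'' : ∀ y ∈ Icc a b, |f'' y| ≤ M) (hx : x ∈ Icc a b) :
    |f' x - (f b - f a) / (b - a)| ≤ M * (b - a) := by
  obtain ⟨ξ, hξ, hslope⟩ := exists_hasDerivAt_eq_slope f f' hab
    (fun y hy => (hf y hy).continuousAt.continuousWithinAt)
    (fun y hy => hf y (Ioo_subset_Icc_self hy))
  have hM : 0 ≤ M := (abs_nonneg _).trans (hf'' a (left_mem_Icc.2 hab.le))
  rw [← hslope]
  calc |f' x - f' ξ| ≤ M * |x - ξ| :=
        (convex_Icc a b).norm_image_sub_le_of_norm_hasDerivWithin_le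
          (fun y hy => (hf' y hy).hasDerivWithinAt) hf'' (Ioo_subset_Icc_self hξ) hx
    _ ≤ M * (b - a) := by
        gcongr
        exact abs_sub_le_iff.2 ⟨by linarith [hx.2, hξ.1], by linarith [hx.1, hξ.2]⟩

theorem abs_deriv_le_of_abs_deriv2_le {f f' f'' : ℝ → ℝ} {a b M x : ℝ} (hab : a < b)
    (hf : ∀ y ∈ Icc a b, HasDerivAt f (f' y) y)
    (hf' : ∀ y ∈ Icc a b, HasDerivAt f' (f'' y) y)
    (hf'' : ∀ y ∈ Icc a b, |f'' y| ≤ M) (hx : x ∈ Icc a b) :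
    |f' x| ≤ (|f a| + |f b|) / (b - a) + M * (b - a) := by
  have hslope : |(f b - f a) / (b - a)| ≤ (|f a| + |f b|) / (b - a) := by
    rw [abs_div, abs_of_pos (sub_pos.2 hab)]
    gcongr
    exact (abs_sub _ _).trans_eq (add_comm _ _)
  exact (norm_le_norm_add_norm_sub' (f' x) _).trans
    (add_le_add hslope (abs_deriv_sub_slope_le hab hf hf' hf'' hx))

theorem exists_Icc_subset_Ioo_of_mem {c d t h : ℝ} (ht : t ∈ Ioo c d) (hh : 0 ≤ h)
    (hhd : 2 * h < d - c) : ∃ a, t ∈ Icc a (a + h) ∧ Icc a (a + h) ⊆ Ioo c d := by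
  rcases le_or_gt t ((c + d) / 2) with hmid | hmid
  · exact ⟨t, ⟨le_rfl, by linarith⟩,
      fun x hx => ⟨by linarith [ht.1, hx.1], by linarith [hx.2]⟩⟩
  · exact ⟨t - h, ⟨by linarith, by linarith⟩,
      fun x hx => ⟨by linarith [hx.1], by linarith [ht.2, hx.2]⟩⟩

theorem first_derivative_tendsto_zero_general
    (T : ℝ) (hT : 0 < T)
    (S : Set ℝ) (hS : S = ⋃ k : ℕ, Ioo ((k:ℝ)*T) (((k:ℝ)+1)*T))
    (Z Z' Z'' : ℝ → ℝ)
    (hZd : ∀ t ∈ S, HasDerivAt Z (Z' t) t)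
    (hZd2 : ∀ t ∈ S, HasDerivAt Z' (Z'' t) t)
    (M : ℝ) (hbound : ∀ t ∈ S, |Z'' t| ≤ M)
    (hlim : Tendsto Z atTop (nhds 0)) :
    ∀ ε > 0, ∃ t₀ : ℝ, ∀ t ∈ S, t₀ ≤ t → |Z' t| < ε := by
  intro ε hε
  have hwidth : ∀ᶠ h in 𝓝[>] (0 : ℝ), 0 < h ∧ h < T / 2 ∧ M * h < ε / 2 :=
    eventually_mem_nhdsWithin.and <| nhdsWithin_le_nhds <|
      (eventually_lt_nhds (half_pos hT)).and <|
        (tendsto_id.const_mul M).eventually (gt_mem_nhds (by simpa using half_pos hε))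
  obtain ⟨h, hh, hhT, hMh⟩ := hwidth.exists
  obtain ⟨N, hN⟩ := eventually_atTop.1 <|
    (tendsto_zero_iff_norm_tendsto_zero.1 hlim).eventually
      (gt_mem_nhds (by positivity : 0 < ε * h / 4))
  refine ⟨N + h, fun t ht htN => ?_⟩
  obtain ⟨k, hk⟩ := mem_iUnion.1 (hS ▸ ht)
  obtain ⟨a, hta, haS⟩ := exists_Icc_subset_Ioo_of_mem hk hh.le (by linarith)
  replace haS : Icc a (a + h) ⊆ S := hS ▸ haS.trans (subset_iUnion_of_subset k subset_rfl)
  have hZa : |Z a| < ε * h / 4 := hN a (by linarith [hta.2])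
  have hZb : |Z (a + h)| < ε * h / 4 := hN (a + h) (by linarith [hta.2])
  have hslope : (|Z a| + |Z (a + h)|) / h < ε / 2 := by
    rw [div_lt_iff₀ hh]
    linarith
  calc |Z' t| ≤ (|Z a| + |Z (a + h)|) / (a + h - a) + M * (a + h - a) :=
        abs_deriv_le_of_abs_deriv2_le (by linarith) (fun y hy => hZd y (haS hy))
          (fun y hy => hZd2 y (haS hy)) (fun y hy => hbound y (haS hy)) hta
    _ < ε := by rw [add_sub_cancel_left]; linarith

/-- if `Z → 0` at infinity and `Z''` is bounded off the grid points `kT`,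
then `Z' → 0` at infinity along `S`. -/
theorem first_derivative_tendsto_zero
    (T : ℝ) (hT : 0 < T)
    (S : Set ℝ) (hS : S = ⋃ k : ℕ, Ioo ((k:ℝ)*T) (((k:ℝ)+1)*T))
    (Z Z' Z'' : ℝ → ℝ)
    (hZc : ContinuousOn Z (Ici 0))
    (hZd : ∀ t ∈ S, HasDerivAt Z (Z' t) t)
    (hZd2 : ∀ t ∈ S, HasDerivAt Z' (Z'' t) t)
    (M : ℝ) (hM : 0 ≤ M) (hbound : ∀ t ∈ S, |Z'' t| ≤ M)
    (hlim : Tendsto Z atTop (nhds 0)) :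
    ∀ ε > 0, ∃ t₀ : ℝ, ∀ t ∈ S, t₀ ≤ t → |Z' t| < ε :=
  first_derivative_tendsto_zero_general T hT S hS Z Z' Z'' hZd hZd2 M hbound hlim
end

section
/- Let T > 0, Γ > 0, γ > 0, let B_x, B_y : [0,T] → ℝ be twice continuously differentiable with B_x(0)·B_y'(0) − B_y(0)·B_x'(0) ≠ 0, and let X, Y, Z : [0,∞) → ℝ be bounded functions such that for every k ∈ ℕ, X, Y, Z are differentiable on [2kT, (2k+1)T) (one-sidedly at 2kT) and satisfy there, with s = t − 2kT: X'(t) = 2B_y(s)Z(t) − 2ΓX(t), Y'(t) = −2B_x(s)Z(t) − 2ΓY(t), Z'(t) = 2B_x(s)Y(t) − 2B_y(s)X(t) − 2(Γ+γ)Z(t), and moreover Z' is differentiable from the right at each point 2kT with right second derivative Z''(2kT⁺). If Z(2kT) → 0, Z'(2kT⁺) → 0, and Z''(2kT⁺) → 0 as k → ∞, then X(2kT) → 0 and Y(2kT) → 0 as k → ∞; consequently X(2kT)² + Y(2kT)² + Z(2kT)² → 0. -/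
open Set Filter MeasureTheory

/-!
At the start `a = 2kT` of a driven interval the equation for `Z'` gives
`2 Bx(0) Y(a) - 2 By(0) X(a) = Z'(a⁺) + 2(Γ+γ) Z(a)`. Differentiating that equation once more
from the right and eliminating `X'`, `Y'` with the other two equations gives
`2 Bx'(0) Y(a) - 2 By'(0) X(a)` as a linear combination of `Z(a)`, `Z'(a⁺)`, `Z''(a⁺)`.
Both right-hand sides tend to `0`, and the nondegeneracy condition says exactly that this
`2 × 2` linear system for `(X(a), Y(a))` is invertible.
-/

theorem tendsto_zero_of_tendsto_cross_combinations {ι : Type*} {l : Filter ι} {x y : ι → ℝ}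
    {a b c d : ℝ} (hdet : a * d - b * c ≠ 0)
    (hu : Tendsto (fun i => a * y i - b * x i) l (nhds 0))
    (hv : Tendsto (fun i => c * y i - d * x i) l (nhds 0)) :
    Tendsto x l (nhds 0) ∧ Tendsto y l (nhds 0) := by
  constructor
  · have h := ((hu.const_mul c).sub (hv.const_mul a)).div_const (a * d - b * c)
    simp only [mul_zero, sub_zero, zero_div] at h
    refine h.congr fun i => ?_
    rw [div_eq_iff hdet]
    ring
  · have h := ((hu.const_mul d).sub (hv.const_mul b)).div_const (a * d - b * c)
    simp only [mul_zero, sub_zero, zero_div] at h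
    refine h.congr fun i => ?_
    rw [div_eq_iff hdet]
    ring

theorem hasDerivWithinAt_comp_sub_Ici {f : ℝ → ℝ} {T : ℝ} (hT : 0 < T)
    (hf : DifferentiableWithinAt ℝ f (Icc 0 T) 0) (a : ℝ) :
    HasDerivWithinAt (fun t => f (t - a)) (derivWithin f (Icc 0 T) 0) (Ici a) a := by
  have hf₀ : HasDerivWithinAt f (derivWithin f (Icc 0 T) 0) (Ici 0) 0 :=
    hf.hasDerivWithinAt.mono_of_mem_nhdsWithin (Icc_mem_nhdsGE hT)
  have hshift : HasDerivWithinAt (fun t : ℝ => t - a) 1 (Ici a) a :=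
    (hasDerivWithinAt_id a _).sub_const a
  have hmaps : MapsTo (fun t : ℝ => t - a) (Ici a) (Ici 0) := fun _ ht =>
    sub_nonneg.2 (mem_Ici.1 ht)
  exact (mul_one (derivWithin f (Icc 0 T) 0)) ▸ hf₀.comp_of_eq a hshift hmaps (sub_self a).symm

theorem cross_deriv_field_eq_Z_jet {X Y Z Z' Bx By : ℝ → ℝ} {a X'a Y'a Z''a Bx'a By'a Γ γ : ℝ}
    (hX : HasDerivWithinAt X X'a (Ici a) a) (hY : HasDerivWithinAt Y Y'a (Ici a) a)
    (hZ : HasDerivWithinAt Z (Z' a) (Ici a) a)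
    (hBx : HasDerivWithinAt Bx Bx'a (Ici a) a) (hBy : HasDerivWithinAt By By'a (Ici a) a)
    (hXeq : X'a = 2 * By a * Z a - 2 * Γ * X a)
    (hYeq : Y'a = -(2 * Bx a * Z a) - 2 * Γ * Y a)
    (hZeq : Z' =ᶠ[nhdsWithin a (Ici a)]
      fun t => 2 * Bx t * Y t - 2 * By t * X t - 2 * (Γ + γ) * Z t)
    (hZ' : HasDerivWithinAt Z' Z''a (Ici a) a) :
    2 * Bx'a * Y a - 2 * By'a * X a = Z''a + 2 * (Γ + γ) * Z' a
      + 4 * (Bx a ^ 2 + By a ^ 2) * Z a + 2 * Γ * (Z' a + 2 * (Γ + γ) * Z a) := by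
  have hZ'a : Z' a = 2 * Bx a * Y a - 2 * By a * X a - 2 * (Γ + γ) * Z a :=
    hZeq.eq_of_nhdsWithin self_mem_Ici
  have hZ'' : HasDerivWithinAt Z'
      (2 * Bx'a * Y a + 2 * Bx a * Y'a - (2 * By'a * X a + 2 * By a * X'a)
        - 2 * (Γ + γ) * Z' a) (Ici a) a :=
    ((((hBx.const_mul 2).mul hY).sub ((hBy.const_mul 2).mul hX)).sub
      (hZ.const_mul (2 * (Γ + γ)))).congr_of_eventuallyEq hZeq hZ'a
  rw [(uniqueDiffOn_Ici a a self_mem_Ici).eq_deriv _ hZ' hZ'', hXeq, hYeq, hZ'a]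
  ring

theorem observability_step_general
    (T Γ γ : ℝ) (hT : 0 < T)
    (Bx By : ℝ → ℝ)
    (hBx : ContDiffOn ℝ 2 Bx (Icc 0 T)) (hBy : ContDiffOn ℝ 2 By (Icc 0 T))
    (hnondeg : Bx 0 * derivWithin By (Icc 0 T) 0 - By 0 * derivWithin Bx (Icc 0 T) 0 ≠ 0)
    (X Y Z X' Y' Z' : ℝ → ℝ)
    (hXd : ∀ k : ℕ, ∀ t ∈ Ico (2*(k:ℝ)*T) ((2*(k:ℝ)+1)*T),
      HasDerivWithinAt X (X' t) (Ico (2*(k:ℝ)*T) ((2*(k:ℝ)+1)*T)) t)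
    (hYd : ∀ k : ℕ, ∀ t ∈ Ico (2*(k:ℝ)*T) ((2*(k:ℝ)+1)*T),
      HasDerivWithinAt Y (Y' t) (Ico (2*(k:ℝ)*T) ((2*(k:ℝ)+1)*T)) t)
    (hZd : ∀ k : ℕ, ∀ t ∈ Ico (2*(k:ℝ)*T) ((2*(k:ℝ)+1)*T),
      HasDerivWithinAt Z (Z' t) (Ico (2*(k:ℝ)*T) ((2*(k:ℝ)+1)*T)) t)
    (hXeq : ∀ k : ℕ, ∀ t ∈ Ico (2*(k:ℝ)*T) ((2*(k:ℝ)+1)*T),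
      X' t = 2 * By (t - 2*(k:ℝ)*T) * Z t - 2 * Γ * X t)
    (hYeq : ∀ k : ℕ, ∀ t ∈ Ico (2*(k:ℝ)*T) ((2*(k:ℝ)+1)*T),
      Y' t = -(2 * Bx (t - 2*(k:ℝ)*T) * Z t) - 2 * Γ * Y t)
    (hZeq : ∀ k : ℕ, ∀ t ∈ Ico (2*(k:ℝ)*T) ((2*(k:ℝ)+1)*T),
      Z' t = 2 * Bx (t - 2*(k:ℝ)*T) * Y t - 2 * By (t - 2*(k:ℝ)*T) * X t
        - 2 * (Γ + γ) * Z t)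
    (Z'' : ℕ → ℝ)
    (hZd2 : ∀ k : ℕ, HasDerivWithinAt Z' (Z'' k) (Ici (2*(k:ℝ)*T)) (2*(k:ℝ)*T))
    (hZlim : Tendsto (fun k : ℕ => Z (2*(k:ℝ)*T)) atTop (nhds 0))
    (hZ'lim : Tendsto (fun k : ℕ => Z' (2*(k:ℝ)*T)) atTop (nhds 0))
    (hZ''lim : Tendsto (fun k : ℕ => Z'' k) atTop (nhds 0)) :
    Tendsto (fun k : ℕ => X (2*(k:ℝ)*T)) atTop (nhds 0) ∧
    Tendsto (fun k : ℕ => Y (2*(k:ℝ)*T)) atTop (nhds 0) ∧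
    Tendsto (fun k : ℕ =>
      (X (2*(k:ℝ)*T))^2 + (Y (2*(k:ℝ)*T))^2 + (Z (2*(k:ℝ)*T))^2) atTop (nhds 0) := by
  have h0 : (0 : ℝ) ∈ Icc 0 T := ⟨le_rfl, hT.le⟩
  have hBx₀ := (hBx.differentiableOn two_ne_zero) 0 h0
  have hBy₀ := (hBy.differentiableOn two_ne_zero) 0 h0
  have hstart : ∀ k : ℕ, 2*(k:ℝ)*T ∈ Ico (2*(k:ℝ)*T) ((2*(k:ℝ)+1)*T) := fun k =>
    ⟨le_rfl, by nlinarith⟩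
  have hnhds : ∀ k : ℕ, Ico (2*(k:ℝ)*T) ((2*(k:ℝ)+1)*T) ∈ nhdsWithin (2*(k:ℝ)*T) (Ici _) :=
    fun k => Ico_mem_nhdsGE (hstart k).2
  have hfirst : ∀ k : ℕ, 2 * Bx 0 * Y (2*(k:ℝ)*T) - 2 * By 0 * X (2*(k:ℝ)*T)
      = Z' (2*(k:ℝ)*T) + 2 * (Γ + γ) * Z (2*(k:ℝ)*T) := fun k => by
    have h := hZeq k _ (hstart k)
    rw [sub_self] at h
    linarith
  have hsecond := fun k : ℕ => cross_deriv_field_eq_Z_jet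
    ((hXd k _ (hstart k)).mono_of_mem_nhdsWithin (hnhds k))
    ((hYd k _ (hstart k)).mono_of_mem_nhdsWithin (hnhds k))
    ((hZd k _ (hstart k)).mono_of_mem_nhdsWithin (hnhds k))
    (hasDerivWithinAt_comp_sub_Ici hT hBx₀ _) (hasDerivWithinAt_comp_sub_Ici hT hBy₀ _)
    (hXeq k _ (hstart k)) (hYeq k _ (hstart k)) (eventually_of_mem (hnhds k) (hZeq k)) (hZd2 k)
  simp only [sub_self] at hsecond
  have hu := hZ'lim.add (hZlim.const_mul (2 * (Γ + γ)))
  have hv := (((hZ''lim.add (hZ'lim.const_mul (2 * (Γ + γ)))).add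
    (hZlim.const_mul (4 * (Bx 0 ^ 2 + By 0 ^ 2)))).add (hu.const_mul (2 * Γ)))
  simp only [mul_zero, add_zero] at hu hv
  obtain ⟨hXlim, hYlim⟩ := tendsto_zero_of_tendsto_cross_combinations
    (by contrapose! hnondeg; linarith)
    (hu.congr fun k => (hfirst k).symm) (hv.congr fun k => (hsecond k).symm)
  refine ⟨hXlim, hYlim, ?_⟩
  simpa using ((hXlim.pow 2).add (hYlim.pow 2)).add (hZlim.pow 2)

/-- observability step. If the Bloch coordinates of the error satisfy
the forward equations on each interval `[2kT, (2k+1)T)` and `Z(2kT)`, `Z'(2kT⁺)`,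
`Z''(2kT⁺)` all tend to `0`, then (using `Bx(0)·By'(0) − By(0)·Bx'(0) ≠ 0`)
`X(2kT) → 0` and `Y(2kT) → 0`, hence `X² + Y² + Z²` at `2kT` tends to `0`. -/
theorem observability_step
    (T Γ γ : ℝ) (hT : 0 < T) (hΓ : 0 < Γ) (hγ : 0 < γ)
    (Bx By : ℝ → ℝ)
    (hBx : ContDiffOn ℝ 2 Bx (Icc 0 T)) (hBy : ContDiffOn ℝ 2 By (Icc 0 T))
    (hnondeg : Bx 0 * derivWithin By (Icc 0 T) 0 - By 0 * derivWithin Bx (Icc 0 T) 0 ≠ 0)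
    (X Y Z X' Y' Z' : ℝ → ℝ)
    (hXbdd : ∃ C : ℝ, ∀ t : ℝ, 0 ≤ t → |X t| ≤ C)
    (hYbdd : ∃ C : ℝ, ∀ t : ℝ, 0 ≤ t → |Y t| ≤ C)
    (hZbdd : ∃ C : ℝ, ∀ t : ℝ, 0 ≤ t → |Z t| ≤ C)
    (hXd : ∀ k : ℕ, ∀ t ∈ Ico (2*(k:ℝ)*T) ((2*(k:ℝ)+1)*T),
      HasDerivWithinAt X (X' t) (Ico (2*(k:ℝ)*T) ((2*(k:ℝ)+1)*T)) t)
    (hYd : ∀ k : ℕ, ∀ t ∈ Ico (2*(k:ℝ)*T) ((2*(k:ℝ)+1)*T),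
      HasDerivWithinAt Y (Y' t) (Ico (2*(k:ℝ)*T) ((2*(k:ℝ)+1)*T)) t)
    (hZd : ∀ k : ℕ, ∀ t ∈ Ico (2*(k:ℝ)*T) ((2*(k:ℝ)+1)*T),
      HasDerivWithinAt Z (Z' t) (Ico (2*(k:ℝ)*T) ((2*(k:ℝ)+1)*T)) t)
    (hXeq : ∀ k : ℕ, ∀ t ∈ Ico (2*(k:ℝ)*T) ((2*(k:ℝ)+1)*T),
      X' t = 2 * By (t - 2*(k:ℝ)*T) * Z t - 2 * Γ * X t)
    (hYeq : ∀ k : ℕ, ∀ t ∈ Ico (2*(k:ℝ)*T) ((2*(k:ℝ)+1)*T),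
      Y' t = -(2 * Bx (t - 2*(k:ℝ)*T) * Z t) - 2 * Γ * Y t)
    (hZeq : ∀ k : ℕ, ∀ t ∈ Ico (2*(k:ℝ)*T) ((2*(k:ℝ)+1)*T),
      Z' t = 2 * Bx (t - 2*(k:ℝ)*T) * Y t - 2 * By (t - 2*(k:ℝ)*T) * X t
        - 2 * (Γ + γ) * Z t)
    (Z'' : ℕ → ℝ)
    (hZd2 : ∀ k : ℕ, HasDerivWithinAt Z' (Z'' k) (Ici (2*(k:ℝ)*T)) (2*(k:ℝ)*T))
    (hZlim : Tendsto (fun k : ℕ => Z (2*(k:ℝ)*T)) atTop (nhds 0))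
    (hZ'lim : Tendsto (fun k : ℕ => Z' (2*(k:ℝ)*T)) atTop (nhds 0))
    (hZ''lim : Tendsto (fun k : ℕ => Z'' k) atTop (nhds 0)) :
    Tendsto (fun k : ℕ => X (2*(k:ℝ)*T)) atTop (nhds 0) ∧
    Tendsto (fun k : ℕ => Y (2*(k:ℝ)*T)) atTop (nhds 0) ∧
    Tendsto (fun k : ℕ =>
      (X (2*(k:ℝ)*T))^2 + (Y (2*(k:ℝ)*T))^2 + (Z (2*(k:ℝ)*T))^2) atTop (nhds 0) :=
  observability_step_general T Γ γ hT Bx By hBx hBy hnondeg X Y Z X' Y' Z' hXd hYd hZd hXeq hYeq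
    hZeq Z'' hZd2 hZlim hZ'lim hZ''lim
end
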